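/- Let D be a distance measure satisfying the data processing inequality (D(N(ρ), N(σ)) ≤ D(ρ,σ) for every channel N) and the triangle inequality, and suppose the free states on the composite system are ℱ_AB = conv{τ_A ⊗ τ_B : τ_A ∈ ℱ_A, τ_B ∈ ℱ_B}. Then for all states ρ₁ on system A and ρ₂ on system B, the induced resource measure satisfies max{ω_D(ρ₁), ω_D(ρ₂)} ≤ ω_D(ρ₁ ⊗ ρ₂) ≤ ω_D(ρ₁) + ω_D(ρ₂), where ω_D on each system is taken with respect to the corresponding free set. -/

import Mathlib

/-!
Both bounds come from data processing. The marginals of a convex combination of products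
`τ_A ⊗ τ_B` of free states are convex combinations of the `τ_A`, resp. the `τ_B`, hence free; so
tracing out `B` (or `A`) shows `ω_D(ρ₁) ≤ D(ρ₁ ⊗ ρ₂, σ)` for every free `σ` of the composite
system. Conversely, the triangle inequality through `τ_A ⊗ ρ₂`, together with data processing
under the channels `X ↦ X ⊗ ρ₂` and `X ↦ τ_A ⊗ X`, gives
`D(ρ₁ ⊗ ρ₂, τ_A ⊗ τ_B) ≤ D(ρ₁, τ_A) + D(ρ₂, τ_B)`.
-/

open scoped Kronecker ComplexOrder

variable {ι : Type*} [Fintype ι] [DecidableEq ι]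

/-- A quantum state: positive semidefinite matrix of trace one. -/
def IsState (ρ : Matrix ι ι ℂ) : Prop := ρ.PosSemidef ∧ ρ.trace = 1

/-- The action of `id_n ⊗ N` on block matrices. -/
def idTensorMap (n : ℕ) (N : Matrix ι ι ℂ →ₗ[ℂ] Matrix ι ι ℂ)
    (M : Matrix (Fin n × ι) (Fin n × ι) ℂ) : Matrix (Fin n × ι) (Fin n × ι) ℂ :=
  Matrix.of fun p q => N (Matrix.of fun k l => M (p.1, k) (q.1, l)) p.2 q.2

/-- A quantum channel: completely positive trace preserving linear map. -/
structure Channel (ι : Type*) [Fintype ι] [DecidableEq ι] where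
  map : Matrix ι ι ℂ →ₗ[ℂ] Matrix ι ι ℂ
  cp : ∀ (n : ℕ) (M : Matrix (Fin n × ι) (Fin n × ι) ℂ), M.PosSemidef →
        (idTensorMap n map M).PosSemidef
  tp : ∀ A : Matrix ι ι ℂ, (map A).trace = A.trace

/-- The positive semidefinite square root (the former `Matrix.PosSemidef.sqrt`). -/
noncomputable def posSemidefSqrt {M : Matrix ι ι ℂ} (hM : M.PosSemidef) : Matrix ι ι ℂ :=
  hM.1.eigenvectorUnitary.1 * Matrix.diagonal ((↑) ∘ (Real.sqrt ∘ hM.1.eigenvalues)) *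
  (star hM.1.eigenvectorUnitary : Matrix ι ι ℂ)

/-- The trace norm ‖A‖₁ = Tr √(AᴴA). -/
noncomputable def traceNorm (A : Matrix ι ι ℂ) : ℝ :=
  (posSemidefSqrt (Matrix.posSemidef_conjTranspose_mul_self A)).trace.re

/-- Trace-norm resource measure ω₁. -/
noncomputable def omega1 (F : Set (Matrix ι ι ℂ)) (ρ : Matrix ι ι ℂ) : ℝ :=
  (1/2) * sInf ((fun σ => traceNorm (ρ - σ)) '' F)

/-- Trace-norm resource generating power Ω₁. -/
noncomputable def genPower1 (F : Set (Matrix ι ι ℂ)) (N : Matrix ι ι ℂ → Matrix ι ι ℂ) : ℝ :=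
  sSup ((fun ρ => omega1 F (N ρ)) '' F)

/-- Trace-norm resource increasing power Ω̃₁. -/
noncomputable def incPower1 (F : Set (Matrix ι ι ℂ)) (N : Matrix ι ι ℂ → Matrix ι ι ℂ) : ℝ :=
  sSup ((fun ρ => omega1 F (N ρ) - omega1 F ρ) '' {ρ | IsState ρ})

/-- Holevo–Helstrom success probability of discriminating two channels with probe `ρ`. -/
noncomputable def psuccPair (N M : Matrix ι ι ℂ → Matrix ι ι ℂ) (ρ : Matrix ι ι ℂ) : ℝ :=
  1/2 + (1/4) * traceNorm (N ρ - M ρ)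

/-- Success probability of discriminating `N` from the set of channels `Free` with probe `ρ`. -/
noncomputable def psuccChan (N : Matrix ι ι ℂ → Matrix ι ι ℂ) (Free : Set (Channel ι))
    (ρ : Matrix ι ι ℂ) : ℝ :=
  sInf ((fun M : Channel ι => psuccPair N (⇑M.map) ρ) '' Free)

/-- Maximum success probability of discriminating `N` from `Free` using probes from `F`. -/
noncomputable def psuccFF (N : Matrix ι ι ℂ → Matrix ι ι ℂ) (Free : Set (Channel ι))
    (F : Set (Matrix ι ι ℂ)) : ℝ :=
  sSup ((fun ρ => psuccChan N Free ρ) '' F)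

/-- The action of `id_n ⊗ N` on block matrices, for a map between different systems. -/
def blockApply {ι κ : Type} [Fintype ι] [DecidableEq ι] [Fintype κ] [DecidableEq κ] (n : ℕ)
    (N : Matrix ι ι ℂ →ₗ[ℂ] Matrix κ κ ℂ)
    (M : Matrix (Fin n × ι) (Fin n × ι) ℂ) : Matrix (Fin n × κ) (Fin n × κ) ℂ :=
  Matrix.of fun p q => N (Matrix.of fun k l => M (p.1, k) (q.1, l)) p.2 q.2

/-- A quantum channel between (possibly different) systems: a completely positive trace
preserving linear map. -/
structure CPTPMap (ι κ : Type) [Fintype ι] [DecidableEq ι] [Fintype κ] [DecidableEq κ] where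
  map : Matrix ι ι ℂ →ₗ[ℂ] Matrix κ κ ℂ
  cp : ∀ (n : ℕ) (M : Matrix (Fin n × ι) (Fin n × ι) ℂ), M.PosSemidef →
        (blockApply n map M).PosSemidef
  tp : ∀ A : Matrix ι ι ℂ, (map A).trace = A.trace

section States

variable {m n : Type*} [Fintype m] [Fintype n]

theorem IsState.kronecker [DecidableEq m] [DecidableEq n] {ρ : Matrix m m ℂ} {σ : Matrix n n ℂ}
    (hρ : IsState ρ) (hσ : IsState σ) : IsState (ρ ⊗ₖ σ) :=
  ⟨hρ.1.kronecker hσ.1, by rw [Matrix.trace_kronecker, hρ.2, hσ.2, one_mul]⟩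

theorem convex_setOf_isState : Convex ℝ {ρ : Matrix m m ℂ | IsState ρ} := by
  intro x hx y hy a b ha hb hab
  refine ⟨(hx.1.smul ha).add (hy.1.smul hb), ?_⟩
  simp [Matrix.trace_add, Matrix.trace_smul, hx.2, hy.2, ← Complex.ofReal_add, hab]

end States

namespace CPTPMap

variable {A B : Type} [Fintype A] [DecidableEq A] [Fintype B] [DecidableEq B]

noncomputable def traceRight : CPTPMap (A × B) A where
  map :=
    { toFun := fun M => Matrix.of fun i j => ∑ k, M (i, k) (j, k)
      map_add' := fun M N => by ext i j; simp [Finset.sum_add_distrib]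
      map_smul' := fun c M => by ext i j; simp [Finset.mul_sum] }
  cp n M hM := by
    convert Matrix.posSemidef_sum Finset.univ fun (k : B) _ =>
      hM.submatrix fun p : Fin n × A => (p.1, (p.2, k)) using 1
    ext p q
    simp [blockApply, Matrix.sum_apply]
  tp M := by simp [Matrix.trace, Fintype.sum_prod_type]

noncomputable def traceLeft : CPTPMap (A × B) B where
  map :=
    { toFun := fun M => Matrix.of fun i j => ∑ k, M (k, i) (k, j)
      map_add' := fun M N => by ext i j; simp [Finset.sum_add_distrib]
      map_smul' := fun c M => by ext i j; simp [Finset.mul_sum] }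
  cp n M hM := by
    convert Matrix.posSemidef_sum Finset.univ fun (k : A) _ =>
      hM.submatrix fun p : Fin n × B => (p.1, (k, p.2)) using 1
    ext p q
    simp [blockApply, Matrix.sum_apply]
  tp M := by simp [Matrix.trace, Fintype.sum_prod_type, Finset.sum_comm (γ := A)]

noncomputable def kroneckerRight (σ : Matrix B B ℂ) (hσ : IsState σ) : CPTPMap A (A × B) where
  map := (Matrix.kroneckerBilinear (R := ℂ)).flip σ
  cp n M hM := by
    have hMσ : (M ⊗ₖ σ).PosSemidef := hM.kronecker hσ.1
    convert hMσ.submatrix fun p : Fin n × (A × B) => ((p.1, p.2.1), p.2.2) using 1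
    ext p q
    simp [Matrix.kroneckerBilinear, blockApply]
  tp M := by simp [Matrix.kroneckerBilinear, Matrix.trace_kronecker, hσ.2]

noncomputable def kroneckerLeft (σ : Matrix A A ℂ) (hσ : IsState σ) : CPTPMap B (A × B) where
  map := Matrix.kroneckerBilinear (R := ℂ) σ
  cp n M hM := by
    have hσM : (σ ⊗ₖ M).PosSemidef := hσ.1.kronecker hM
    convert hσM.submatrix fun p : Fin n × (A × B) => (p.2.1, (p.1, p.2.2)) using 1
    ext p q
    simp [Matrix.kroneckerBilinear, blockApply]
  tp M := by simp [Matrix.kroneckerBilinear, Matrix.trace_kronecker, hσ.2]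

theorem traceRight_map_kronecker (a : Matrix A A ℂ) {b : Matrix B B ℂ} (hb : b.trace = 1) :
    traceRight.map (a ⊗ₖ b) = a := by
  have hb' : ∑ k, b k k = 1 := hb
  ext i j
  simp [traceRight, ← Finset.mul_sum, hb']

theorem traceLeft_map_kronecker {a : Matrix A A ℂ} (ha : a.trace = 1) (b : Matrix B B ℂ) :
    traceLeft.map (a ⊗ₖ b) = b := by
  have ha' : ∑ k, a k k = 1 := ha
  ext i j
  simp [traceLeft, ← Finset.sum_mul, ha']

end CPTPMap

section Infimum

variable {α β γ : Type*}

theorem csInf_image_le_csInf_image_of_forall_exists_le [ConditionallyCompleteLattice γ]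
    {S : Set α} {T : Set β} {f : α → γ} {g : β → γ} (hS : S.Nonempty) (hT : BddBelow (g '' T))
    (h : ∀ s ∈ S, ∃ t ∈ T, g t ≤ f s) : sInf (g '' T) ≤ sInf (f '' S) :=
  le_csInf (hS.image f) <| Set.forall_mem_image.2 fun s hs =>
    let ⟨t, ht, hts⟩ := h s hs
    (csInf_le hT ⟨t, ht, rfl⟩).trans hts

theorem le_csInf_image_add_csInf_image [ConditionallyCompleteLattice γ] [AddGroup γ]
    [AddLeftMono γ] [AddRightMono γ] {S : Set α} {T : Set β} {f : α → γ} {g : β → γ} {c : γ}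
    (hS : S.Nonempty) (hT : T.Nonempty) (h : ∀ s ∈ S, ∀ t ∈ T, c ≤ f s + g t) :
    c ≤ sInf (f '' S) + sInf (g '' T) := by
  have := hS.to_subtype
  have := hT.to_subtype
  rw [sInf_image', sInf_image']
  exact le_ciInf_add_ciInf fun s t => h s s.2 t t.2

end Infimum

section Distance

variable (D : ∀ (ι : Type) [Fintype ι] [DecidableEq ι], Matrix ι ι ℂ → Matrix ι ι ℂ → ℝ)

def DataProcessingInequality : Prop :=
  ∀ (ι κ : Type) [Fintype ι] [DecidableEq ι] [Fintype κ] [DecidableEq κ]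
    (N : CPTPMap ι κ) (ρ σ : Matrix ι ι ℂ), IsState ρ → IsState σ →
    D κ (N.map ρ) (N.map σ) ≤ D ι ρ σ

def TriangleInequality : Prop :=
  ∀ (ι : Type) [Fintype ι] [DecidableEq ι] (ρ σ τ : Matrix ι ι ℂ),
    IsState ρ → IsState σ → IsState τ → D ι ρ σ ≤ D ι ρ τ + D ι τ σ

variable {D} {A B : Type} [Fintype A] [DecidableEq A] [Fintype B] [DecidableEq B]
  {ρ₁ σ₁ : Matrix A A ℂ} {ρ₂ σ₂ : Matrix B B ℂ}

theorem DataProcessingInequality.le_traceRight (hD : DataProcessingInequality D)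
    (hρ₁ : IsState ρ₁) (hρ₂ : IsState ρ₂) {σ : Matrix (A × B) (A × B) ℂ} (hσ : IsState σ) :
    D A ρ₁ (CPTPMap.traceRight.map σ) ≤ D (A × B) (ρ₁ ⊗ₖ ρ₂) σ := by
  simpa only [CPTPMap.traceRight_map_kronecker ρ₁ hρ₂.2] using
    hD _ _ CPTPMap.traceRight _ σ (hρ₁.kronecker hρ₂) hσ

theorem DataProcessingInequality.le_traceLeft (hD : DataProcessingInequality D)
    (hρ₁ : IsState ρ₁) (hρ₂ : IsState ρ₂) {σ : Matrix (A × B) (A × B) ℂ} (hσ : IsState σ) :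
    D B ρ₂ (CPTPMap.traceLeft.map σ) ≤ D (A × B) (ρ₁ ⊗ₖ ρ₂) σ := by
  simpa only [CPTPMap.traceLeft_map_kronecker hρ₁.2 ρ₂] using
    hD _ _ CPTPMap.traceLeft _ σ (hρ₁.kronecker hρ₂) hσ

theorem kronecker_le_add (hDPI : DataProcessingInequality D) (hTri : TriangleInequality D)
    (hρ₁ : IsState ρ₁) (hσ₁ : IsState σ₁) (hρ₂ : IsState ρ₂) (hσ₂ : IsState σ₂) :
    D (A × B) (ρ₁ ⊗ₖ ρ₂) (σ₁ ⊗ₖ σ₂) ≤ D A ρ₁ σ₁ + D B ρ₂ σ₂ :=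
  calc D (A × B) (ρ₁ ⊗ₖ ρ₂) (σ₁ ⊗ₖ σ₂)
      ≤ D (A × B) (ρ₁ ⊗ₖ ρ₂) (σ₁ ⊗ₖ ρ₂) + D (A × B) (σ₁ ⊗ₖ ρ₂) (σ₁ ⊗ₖ σ₂) :=
        hTri _ _ _ _ (hρ₁.kronecker hρ₂) (hσ₁.kronecker hσ₂) (hσ₁.kronecker hρ₂)
    _ ≤ D A ρ₁ σ₁ + D B ρ₂ σ₂ :=
        add_le_add (hDPI _ _ (CPTPMap.kroneckerRight ρ₂ hρ₂) _ _ hρ₁ hσ₁)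
          (hDPI _ _ (CPTPMap.kroneckerLeft σ₁ hσ₁) _ _ hρ₂ hσ₂)

end Distance

theorem convexHull_kronecker_subset {A B : Type} [Fintype A] [DecidableEq A] [Fintype B]
    [DecidableEq B] {FA : Set (Matrix A A ℂ)} {FB : Set (Matrix B B ℂ)}
    (hFAstate : ∀ ρ ∈ FA, IsState ρ) (hFAconv : Convex ℝ FA)
    (hFBstate : ∀ ρ ∈ FB, IsState ρ) (hFBconv : Convex ℝ FB) :
    convexHull ℝ {ρ : Matrix (A × B) (A × B) ℂ | ∃ a ∈ FA, ∃ b ∈ FB, ρ = a ⊗ₖ b} ⊆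
      {σ | IsState σ ∧ CPTPMap.traceRight.map σ ∈ FA ∧ CPTPMap.traceLeft.map σ ∈ FB} := by
  refine convexHull_min ?_ <| convex_setOf_isState.inter <|
    (hFAconv.linear_preimage (CPTPMap.traceRight.map.restrictScalars ℝ)).inter
      (hFBconv.linear_preimage (CPTPMap.traceLeft.map.restrictScalars ℝ))
  rintro _ ⟨a, ha, b, hb, rfl⟩
  refine ⟨(hFAstate a ha).kronecker (hFBstate b hb), ?_, ?_⟩
  · rwa [CPTPMap.traceRight_map_kronecker a (hFBstate b hb).2]
  · rwa [CPTPMap.traceLeft_map_kronecker (hFAstate a ha).2 b]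

theorem stmt19_general {A B : Type} [Fintype A] [DecidableEq A] [Fintype B] [DecidableEq B]
    (D : ∀ (ι : Type) [Fintype ι] [DecidableEq ι], Matrix ι ι ℂ → Matrix ι ι ℂ → ℝ)
    (hDpos : ∀ (ι : Type) [Fintype ι] [DecidableEq ι] (ρ σ : Matrix ι ι ℂ),
      IsState ρ → IsState σ → 0 ≤ D ι ρ σ)
    (hDPI : ∀ (ι κ : Type) [Fintype ι] [DecidableEq ι] [Fintype κ] [DecidableEq κ]
      (N : CPTPMap ι κ) (ρ σ : Matrix ι ι ℂ), IsState ρ → IsState σ →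
      D κ (N.map ρ) (N.map σ) ≤ D ι ρ σ)
    (hTri : ∀ (ι : Type) [Fintype ι] [DecidableEq ι] (ρ σ τ : Matrix ι ι ℂ),
      IsState ρ → IsState σ → IsState τ → D ι ρ σ ≤ D ι ρ τ + D ι τ σ)
    (FA : Set (Matrix A A ℂ)) (hFAne : FA.Nonempty) (hFAstate : ∀ ρ ∈ FA, IsState ρ)
    (hFAconv : Convex ℝ FA)
    (FB : Set (Matrix B B ℂ)) (hFBne : FB.Nonempty) (hFBstate : ∀ ρ ∈ FB, IsState ρ)
    (hFBconv : Convex ℝ FB)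
    (ρ₁ : Matrix A A ℂ) (hρ₁ : IsState ρ₁) (ρ₂ : Matrix B B ℂ) (hρ₂ : IsState ρ₂) :
    max (sInf ((fun σ => D A ρ₁ σ) '' FA)) (sInf ((fun σ => D B ρ₂ σ) '' FB))
        ≤ sInf ((fun σ => D (A × B) (ρ₁ ⊗ₖ ρ₂) σ) ''
            (convexHull ℝ {ρ : Matrix (A × B) (A × B) ℂ | ∃ a ∈ FA, ∃ b ∈ FB, ρ = a ⊗ₖ b})) ∧
    sInf ((fun σ => D (A × B) (ρ₁ ⊗ₖ ρ₂) σ) ''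
        (convexHull ℝ {ρ : Matrix (A × B) (A × B) ℂ | ∃ a ∈ FA, ∃ b ∈ FB, ρ = a ⊗ₖ b}))
      ≤ sInf ((fun σ => D A ρ₁ σ) '' FA) + sInf ((fun σ => D B ρ₂ σ) '' FB) := by
  set FAB := convexHull ℝ {ρ : Matrix (A × B) (A × B) ℂ | ∃ a ∈ FA, ∃ b ∈ FB, ρ = a ⊗ₖ b}
  have hmarginals := convexHull_kronecker_subset hFAstate hFAconv hFBstate hFBconv
  have hprod : ∀ a ∈ FA, ∀ b ∈ FB, a ⊗ₖ b ∈ FAB := fun a ha b hb =>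
    subset_convexHull ℝ _ ⟨a, ha, b, hb, rfl⟩
  obtain ⟨a₀, ha₀⟩ := hFAne
  obtain ⟨b₀, hb₀⟩ := hFBne
  have hFABne : FAB.Nonempty := ⟨_, hprod a₀ ha₀ b₀ hb₀⟩
  refine ⟨max_le ?_ ?_, ?_⟩
  · refine csInf_image_le_csInf_image_of_forall_exists_le hFABne
      ⟨0, Set.forall_mem_image.2 fun σ hσ => hDpos _ _ _ hρ₁ (hFAstate σ hσ)⟩ fun σ hσ => ?_
    obtain ⟨hσ, hσA, -⟩ := hmarginals hσ
    exact ⟨_, hσA, DataProcessingInequality.le_traceRight hDPI hρ₁ hρ₂ hσ⟩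
  · refine csInf_image_le_csInf_image_of_forall_exists_le hFABne
      ⟨0, Set.forall_mem_image.2 fun σ hσ => hDpos _ _ _ hρ₂ (hFBstate σ hσ)⟩ fun σ hσ => ?_
    obtain ⟨hσ, -, hσB⟩ := hmarginals hσ
    exact ⟨_, hσB, DataProcessingInequality.le_traceLeft hDPI hρ₁ hρ₂ hσ⟩
  · have hbdd : BddBelow ((fun σ => D (A × B) (ρ₁ ⊗ₖ ρ₂) σ) '' FAB) :=
      ⟨0, Set.forall_mem_image.2 fun σ hσ =>
        hDpos _ _ _ (hρ₁.kronecker hρ₂) (hmarginals hσ).1⟩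
    refine le_csInf_image_add_csInf_image ⟨a₀, ha₀⟩ ⟨b₀, hb₀⟩ fun a ha b hb => ?_
    exact (csInf_le hbdd ⟨_, hprod a ha b hb, rfl⟩).trans <|
      kronecker_le_add hDPI hTri hρ₁ (hFAstate a ha) hρ₂ (hFBstate b hb)

/-- for a contractive distance `D` satisfying the triangle inequality, and free
states of the composite system given by the convex hull of products of free states, one has
`max{ω_D(ρ₁), ω_D(ρ₂)} ≤ ω_D(ρ₁ ⊗ ρ₂) ≤ ω_D(ρ₁) + ω_D(ρ₂)`. -/
theorem stmt19 {A B : Type} [Fintype A] [DecidableEq A] [Fintype B] [DecidableEq B]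
    (D : ∀ (ι : Type) [Fintype ι] [DecidableEq ι], Matrix ι ι ℂ → Matrix ι ι ℂ → ℝ)
    (hDpos : ∀ (ι : Type) [Fintype ι] [DecidableEq ι] (ρ σ : Matrix ι ι ℂ),
      IsState ρ → IsState σ → 0 ≤ D ι ρ σ)
    (hDzero : ∀ (ι : Type) [Fintype ι] [DecidableEq ι] (ρ σ : Matrix ι ι ℂ),
      IsState ρ → IsState σ → (D ι ρ σ = 0 ↔ ρ = σ))
    (hDPI : ∀ (ι κ : Type) [Fintype ι] [DecidableEq ι] [Fintype κ] [DecidableEq κ]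
      (N : CPTPMap ι κ) (ρ σ : Matrix ι ι ℂ), IsState ρ → IsState σ →
      D κ (N.map ρ) (N.map σ) ≤ D ι ρ σ)
    (hTri : ∀ (ι : Type) [Fintype ι] [DecidableEq ι] (ρ σ τ : Matrix ι ι ℂ),
      IsState ρ → IsState σ → IsState τ → D ι ρ σ ≤ D ι ρ τ + D ι τ σ)
    (FA : Set (Matrix A A ℂ)) (hFAne : FA.Nonempty) (hFAstate : ∀ ρ ∈ FA, IsState ρ)
    (hFAconv : Convex ℝ FA) (hFAclosed : IsClosed FA)
    (FB : Set (Matrix B B ℂ)) (hFBne : FB.Nonempty) (hFBstate : ∀ ρ ∈ FB, IsState ρ)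
    (hFBconv : Convex ℝ FB) (hFBclosed : IsClosed FB)
    (ρ₁ : Matrix A A ℂ) (hρ₁ : IsState ρ₁) (ρ₂ : Matrix B B ℂ) (hρ₂ : IsState ρ₂) :
    max (sInf ((fun σ => D A ρ₁ σ) '' FA)) (sInf ((fun σ => D B ρ₂ σ) '' FB))
        ≤ sInf ((fun σ => D (A × B) (ρ₁ ⊗ₖ ρ₂) σ) ''
            (convexHull ℝ {ρ : Matrix (A × B) (A × B) ℂ | ∃ a ∈ FA, ∃ b ∈ FB, ρ = a ⊗ₖ b})) ∧
    sInf ((fun σ => D (A × B) (ρ₁ ⊗ₖ ρ₂) σ) ''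
        (convexHull ℝ {ρ : Matrix (A × B) (A × B) ℂ | ∃ a ∈ FA, ∃ b ∈ FB, ρ = a ⊗ₖ b}))
      ≤ sInf ((fun σ => D A ρ₁ σ) '' FA) + sInf ((fun σ => D B ρ₂ σ) '' FB) :=
  stmt19_general D hDpos hDPI hTri FA hFAne hFAstate hFAconv FB hFBne hFBstate hFBconv ρ₁ hρ₁ ρ₂ hρ₂
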